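/- Let V : ℝ → ℝ be four times continuously differentiable with V(−1) = V(1) = 0. Then ∫_{−1}^{1} z·(d/dz)(V‴(z)·V(z)) dz = (1/2)·(V′(1)² − V′(−1)²). -/

import Mathlib

/-! With `V(±1) = 0`, the product `V‴ V` vanishes at both ends, so one integration by parts
turns `∫ z (V‴ V)'` into `-∫ V‴ V`; a second one turns this into `∫ V″ V′`, which is the
integral of `((V′)² / 2)'`. -/

open MeasureTheory intervalIntegral Set

section BoundaryTerms

variable {a b : ℝ}

theorem integral_id_mul_deriv_eq_neg_integral_of_eq_zero {f f' : ℝ → ℝ}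
    (hf : ∀ x ∈ uIcc a b, HasDerivAt f (f' x) x) (hf' : IntervalIntegrable f' volume a b)
    (ha : f a = 0) (hb : f b = 0) :
    ∫ x in a..b, x * f' x = -∫ x in a..b, f x := by
  have := integral_mul_deriv_eq_deriv_mul (fun x _ ↦ hasDerivAt_id x) hf
    (intervalIntegrable_const (c := (1 : ℝ))) hf'
  simpa [ha, hb] using this

theorem integral_deriv_mul_eq_neg_integral_mul_deriv_of_eq_zero {u u' v v' : ℝ → ℝ}
    (hu : ∀ x ∈ uIcc a b, HasDerivAt u (u' x) x) (hv : ∀ x ∈ uIcc a b, HasDerivAt v (v' x) x)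
    (hu' : IntervalIntegrable u' volume a b) (hv' : IntervalIntegrable v' volume a b)
    (ha : v a = 0) (hb : v b = 0) :
    ∫ x in a..b, u' x * v x = -∫ x in a..b, u x * v' x := by
  have := integral_mul_deriv_eq_deriv_mul hv hu hv' hu'
  simp only [ha, hb, zero_mul, sub_zero, zero_sub] at this
  simpa only [mul_comm] using this

theorem integral_deriv_mul_self {g g' : ℝ → ℝ}
    (hg : ∀ x ∈ uIcc a b, HasDerivAt g (g' x) x) (hg' : IntervalIntegrable g' volume a b) :
    ∫ x in a..b, g' x * g x = (g b ^ 2 - g a ^ 2) / 2 := by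
  have := integral_deriv_mul_eq_sub hg hg hg' hg'
  rw [integral_congr (g := fun x ↦ 2 * (g' x * g x)) fun x _ ↦ by ring,
    intervalIntegral.integral_const_mul] at this
  linarith

end BoundaryTerms

theorem ContDiff.hasDerivAt_iterate_deriv {f : ℝ → ℝ} {n : WithTop ℕ∞} {k : ℕ}
    (hf : ContDiff ℝ n f) (hk : ((k + 1 : ℕ) : WithTop ℕ∞) ≤ n) (x : ℝ) :
    HasDerivAt (deriv^[k] f) (deriv^[k + 1] f x) x := by
  rw [Function.iterate_succ_apply']
  have : ContDiff ℝ (1 + k : ℕ) f := hf.of_le (by rwa [add_comm])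
  exact ((this.iterate_deriv' 1 k).differentiable one_ne_zero x).hasDerivAt

theorem ContDiff.intervalIntegrable_iterate_deriv {f : ℝ → ℝ} {n : WithTop ℕ∞} {k : ℕ}
    (hf : ContDiff ℝ n f) (hk : (k : WithTop ℕ∞) ≤ n) (a b : ℝ) :
    IntervalIntegrable (deriv^[k] f) volume a b := by
  have : ContDiff ℝ (0 + k : ℕ) f := hf.of_le (by rwa [zero_add])
  exact (this.iterate_deriv' 0 k).continuous.intervalIntegrable a b

theorem stmt_11 (V : ℝ → ℝ) (hV : ContDiff ℝ 4 V)
    (hVm : V (-1) = 0) (hVp : V 1 = 0) :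
    (∫ z in (-1 : ℝ)..1, z * deriv (fun t => deriv^[3] V t * V t) z)
      = (1 / 2) * ((deriv V 1) ^ 2 - (deriv V (-1)) ^ 2) := by
  have hprod : ContDiff ℝ 1 (fun t ↦ deriv^[3] V t * V t) :=
    (hV.iterate_deriv' 1 3).mul (hV.of_le (by norm_cast))
  have hV0 (x : ℝ) : HasDerivAt V (deriv V x) x :=
    hV.hasDerivAt_iterate_deriv (k := 0) (by norm_cast) x
  have hV1 (x : ℝ) : HasDerivAt (deriv V) (deriv^[2] V x) x :=
    hV.hasDerivAt_iterate_deriv (k := 1) (by norm_cast) x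
  have hV2 (x : ℝ) : HasDerivAt (deriv^[2] V) (deriv^[3] V x) x :=
    hV.hasDerivAt_iterate_deriv (k := 2) (by norm_cast) x
  calc (∫ z in (-1 : ℝ)..1, z * deriv (fun t => deriv^[3] V t * V t) z)
      = -∫ z in (-1 : ℝ)..1, deriv^[3] V z * V z :=
        integral_id_mul_deriv_eq_neg_integral_of_eq_zero
          (fun x _ ↦ (hprod.differentiable one_ne_zero x).hasDerivAt)
          ((hprod.continuous_deriv le_rfl).intervalIntegrable _ _)
          (by simp [hVm]) (by simp [hVp])
    _ = ∫ z in (-1 : ℝ)..1, deriv^[2] V z * deriv V z := by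
        rw [integral_deriv_mul_eq_neg_integral_mul_deriv_of_eq_zero
          (fun x _ ↦ hV2 x) (fun x _ ↦ hV0 x)
          (hV.intervalIntegrable_iterate_deriv (k := 3) (by norm_cast) _ _)
          (hV.intervalIntegrable_iterate_deriv (k := 1) (by norm_cast) _ _) hVm hVp, neg_neg]
    _ = (deriv V 1 ^ 2 - deriv V (-1) ^ 2) / 2 :=
        integral_deriv_mul_self (fun x _ ↦ hV1 x)
          (hV.intervalIntegrable_iterate_deriv (k := 2) (by norm_cast) _ _)
    _ = (1 / 2) * ((deriv V 1) ^ 2 - (deriv V (-1)) ^ 2) := by ring
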